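/- Let Λ ∈ L₊↑ and a ∈ ℝ⁴ be such that the Poincaré transformation g(x) = Λx + a maps the standard wedge W₀ onto itself, i.e. {Λx + a : x ∈ W₀} = W₀. Then a₀ = a₁ = 0, Λ commutes with every standard boost, Λ ∘ Λ₀(t) = Λ₀(t) ∘ Λ for all t ∈ ℝ, and Λ commutes with the reflection, Λ ∘ j₀ = j₀ ∘ Λ. Consequently g commutes with Λ₀(t) and with j₀ as affine maps of ℝ⁴. -/

import Mathlib

noncomputable section

open Matrix

/-- The Minkowski bilinear form on ℝ⁴. -/
def mink (x y : Fin 4 → ℝ) : ℝ := x 0 * y 0 - x 1 * y 1 - x 2 * y 2 - x 3 * y 3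

/-- The Minkowski metric matrix η = diag(1,−1,−1,−1). -/
def eta : Matrix (Fin 4) (Fin 4) ℝ :=
  !![1, 0, 0, 0;
     0, -1, 0, 0;
     0, 0, -1, 0;
     0, 0, 0, -1]

/-- Membership in the proper orthochronous Lorentz group L₊↑. -/
def IsLorentz (Λ : Matrix (Fin 4) (Fin 4) ℝ) : Prop :=
  Λᵀ * eta * Λ = eta ∧ Λ.det = 1 ∧ 0 < Λ 0 0

/-- The standard wedge W₀ = {x : |x₀| < x₁}. -/
def W0 : Set (Fin 4 → ℝ) := {x | |x 0| < x 1}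

/-- The standard boost Λ₀(t). -/
def boost (t : ℝ) (x : Fin 4 → ℝ) : Fin 4 → ℝ :=
  ![x 0 * Real.cosh t + x 1 * Real.sinh t,
    x 0 * Real.sinh t + x 1 * Real.cosh t,
    x 2, x 3]

/-- The reflection j₀ about the edge of the standard wedge. -/
def j0 (x : Fin 4 → ℝ) : Fin 4 → ℝ := ![-x 0, -x 1, x 2, x 3]

/-!
`W₀` is a cone, hence so is `W₀ - a = Λ W₀`. In the light-cone coordinates `x₁ ± x₀` the set
`W₀ - a` is the quadrant `{x₁ + x₀ > -(a₁ + a₀), x₁ - x₀ > -(a₁ - a₀)}`, which is a cone only if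
`a₀ = a₁ = 0`. So `Λ` maps `W₀`, and by continuity its closure, into itself. The only null vectors
of the closed wedge lie on the two boundary rays through `(±1, 1, 0, 0)`, so `Λ` permutes these
rays; it cannot send both to the same ray because they are not orthogonal, and `Λ₀₀ > 0` rules out
swapping them. Thus both rays are eigendirections of `Λ`, and since `Λ` preserves orthogonality it
also preserves the `(x₂, x₃)`-plane. A matrix of this block form commutes with the boosts, which are
diagonal in the same decomposition, and with `j₀`.
-/

open Set Filter Topology

lemma mink_eq_dotProduct_mulVec (x y : Fin 4 → ℝ) : mink x y = x ⬝ᵥ eta *ᵥ y := by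
  simp only [mink, dotProduct, mulVec, Fin.sum_univ_four, eta, of_apply, cons_val', cons_val_fin_one,
    cons_val_zero, cons_val_one, cons_val]
  ring

lemma mink_mulVec_mulVec {Λ : Matrix (Fin 4) (Fin 4) ℝ} (hΛ : Λᵀ * eta * Λ = eta)
    (x y : Fin 4 → ℝ) : mink (Λ *ᵥ x) (Λ *ᵥ y) = mink x y := by
  rw [mink_eq_dotProduct_mulVec, mink_eq_dotProduct_mulVec, mulVec_mulVec, dotProduct_mulVec,
    vecMul_mulVec, ← Matrix.mul_assoc, hΛ, ← dotProduct_mulVec]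

lemma mem_W0_iff {x : Fin 4 → ℝ} : x ∈ W0 ↔ 0 < x 1 + x 0 ∧ 0 < x 1 - x 0 := by
  simp only [W0, mem_ofPred_eq, abs_lt]
  constructor <;> rintro ⟨h₁, h₂⟩ <;> constructor <;> linarith

lemma smul_mem_W0 {l : ℝ} (hl : 0 < l) {x : Fin 4 → ℝ} (hx : x ∈ W0) : l • x ∈ W0 := by
  simp only [mem_W0_iff, Pi.smul_apply, smul_eq_mul] at hx ⊢
  constructor <;> nlinarith

lemma add_mem_W0_iff {x a : Fin 4 → ℝ} (ha0 : a 0 = 0) (ha1 : a 1 = 0) :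
    x + a ∈ W0 ↔ x ∈ W0 := by
  simp [W0, ha0, ha1]

lemma closure_W0 : closure W0 = {x | |x 0| ≤ x 1} := by
  refine Subset.antisymm (closure_minimal (fun x (hx : |x 0| < x 1) => hx.le)
    (isClosed_le (by fun_prop) (by fun_prop))) fun x hx => ?_
  have hlim : Tendsto (fun ε : ℝ => x + ε • Pi.single 1 1) (𝓝[>] 0) (𝓝 x) := by
    have hcont : Continuous fun ε : ℝ => x + ε • (Pi.single 1 1 : Fin 4 → ℝ) := by fun_prop
    simpa using (hcont.tendsto 0).mono_left nhdsWithin_le_nhds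
  refine mem_closure_of_tendsto hlim ?_
  filter_upwards [self_mem_nhdsWithin] with ε hε
  have : |x 0| < x 1 + ε := by linarith [show |x 0| ≤ x 1 from hx, show (0 : ℝ) < ε from hε]
  simpa [W0] using this

lemma eq_zero_of_forall_lt_mul {c : ℝ} (h : ∀ l : ℝ, 0 < l → ∀ u, c < u → c < l * u) :
    c = 0 := by
  rcases lt_trichotomy c 0 with hc | hc | hc
  · have := h 2 two_pos (c / 2) (by linarith)
    linarith
  · exact hc
  · have := h (1 / 4) (by norm_num) (2 * c) (by linarith)
    linarith

lemma eq_zero_and_eq_zero_of_forall_lt_mul {c d : ℝ}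
    (h : ∀ l : ℝ, 0 < l → ∀ u v, c < u → d < v → c < l * u ∧ d < l * v) : c = 0 ∧ d = 0 := by
  have hc : ∀ l : ℝ, 0 < l → ∀ u, c < u → c < l * u := fun l hl u hu =>
    (h l hl u (d + 1) hu (by linarith)).1
  have hd : ∀ l : ℝ, 0 < l → ∀ v, d < v → d < l * v := fun l hl v hv =>
    (h l hl (c + 1) v (by linarith) hv).2
  exact ⟨eq_zero_of_forall_lt_mul hc, eq_zero_of_forall_lt_mul hd⟩

lemma apply_zero_one_eq_zero_of_smul_mem_W0_sub {a : Fin 4 → ℝ}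
    (h : ∀ l : ℝ, 0 < l → ∀ x, x + a ∈ W0 → l • x + a ∈ W0) : a 0 = 0 ∧ a 1 = 0 := by
  suffices -(a 1 + a 0) = 0 ∧ -(a 1 - a 0) = 0 by constructor <;> linarith
  refine eq_zero_and_eq_zero_of_forall_lt_mul fun l hl u v hu hv => ?_
  -- the vector with light-cone coordinates `x₁ + x₀ = u`, `x₁ - x₀ = v`
  set x : Fin 4 → ℝ := ![(u - v) / 2, (u + v) / 2, 0, 0]
  have hx : l • x + a ∈ W0 := h l hl x (by
    simp only [mem_W0_iff, Pi.add_apply, x, cons_val_zero, cons_val_one]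
    constructor <;> linarith)
  simp only [mem_W0_iff, Pi.add_apply, Pi.smul_apply, smul_eq_mul, x, cons_val_zero,
    cons_val_one] at hx
  constructor <;> linarith

lemma apply_zero_one_eq_zero_of_image_eq_W0 {Λ : Matrix (Fin 4) (Fin 4) ℝ} {a : Fin 4 → ℝ}
    (hg : (fun x => Λ *ᵥ x + a) '' W0 = W0) : a 0 = 0 ∧ a 1 = 0 := by
  refine apply_zero_one_eq_zero_of_smul_mem_W0_sub fun l hl x hx => ?_
  rw [← hg] at hx ⊢
  obtain ⟨w, hw, hwx⟩ := hx
  refine ⟨l • w, smul_mem_W0 hl hw, ?_⟩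
  simp only [add_left_inj] at hwx
  simp only [mulVec_smul, hwx]

lemma eq_abs_of_mink_self_eq_zero {y : Fin 4 → ℝ} (hy : mink y y = 0) (hK : |y 0| ≤ y 1) :
    y 1 = |y 0| ∧ y 2 = 0 ∧ y 3 = 0 := by
  simp only [mink] at hy
  have hsq : y 0 * y 0 = |y 0| * |y 0| := (abs_mul_abs_self _).symm
  have h1 : y 1 = |y 0| := by
    nlinarith [abs_nonneg (y 0), mul_self_nonneg (y 2), mul_self_nonneg (y 3)]
  have h23 : y 2 * y 2 + y 3 * y 3 = 0 := by rw [h1, ← hsq] at hy; linarith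
  exact ⟨h1, mul_self_add_mul_self_eq_zero.mp h23⟩

lemma exists_mulVec_lightRays_eq_smul {Λ : Matrix (Fin 4) (Fin 4) ℝ}
    (hΛ : Λᵀ * eta * Λ = eta) (h00 : 0 < Λ 0 0) (hW : MapsTo (Λ *ᵥ ·) W0 W0) :
    ∃ α β : ℝ, 0 < α ∧ 0 < β ∧ Λ *ᵥ ![1, 1, 0, 0] = α • ![1, 1, 0, 0] ∧
      Λ *ᵥ ![-1, 1, 0, 0] = β • ![-1, 1, 0, 0] := by
  have hK : MapsTo (Λ *ᵥ ·) (closure W0) (closure W0) := hW.closure (by fun_prop)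
  rw [closure_W0] at hK
  set p := Λ *ᵥ ![1, 1, 0, 0]
  set q := Λ *ᵥ ![-1, 1, 0, 0]
  obtain ⟨hp1, hp2, hp3⟩ := eq_abs_of_mink_self_eq_zero (y := p)
    (by rw [mink_mulVec_mulVec hΛ]; simp [mink]) (hK (by simp))
  obtain ⟨hq1, hq2, hq3⟩ := eq_abs_of_mink_self_eq_zero (y := q)
    (by rw [mink_mulVec_mulVec hΛ]; simp [mink]) (hK (by simp))
  have hpq : mink p q = -2 := by
    rw [mink_mulVec_mulVec hΛ]; norm_num [mink, cons_val_two, cons_val_three]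
  have hdiff : p 0 - q 0 = 2 * Λ 0 0 := by
    simp [p, q, mulVec, dotProduct, Fin.sum_univ_four, two_mul]
  simp only [mink, hp1, hp2, hp3, hq1, hq2, hq3] at hpq
  have hsign : 0 < p 0 ∧ q 0 < 0 := by
    cases abs_cases (p 0) <;> cases abs_cases (q 0) <;> constructor <;> nlinarith
  refine ⟨p 0, -q 0, hsign.1, by linarith, ?_, ?_⟩ <;> ext i <;> fin_cases i <;>
    simp [hp1, hp2, hp3, hq1, hq2, hq3, abs_of_pos hsign.1, abs_of_neg hsign.2]

def IsWedgeBlock (Λ : Matrix (Fin 4) (Fin 4) ℝ) : Prop :=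
  ∃ c s : ℝ, ∃ B : Matrix (Fin 2) (Fin 2) ℝ,
    Λ = !![c, s, 0, 0; s, c, 0, 0; 0, 0, B 0 0, B 0 1; 0, 0, B 1 0, B 1 1]

lemma isWedgeBlock_of_mulVec_lightRays {Λ : Matrix (Fin 4) (Fin 4) ℝ}
    (hΛ : Λᵀ * eta * Λ = eta) {α β : ℝ} (hα : α ≠ 0) (hβ : β ≠ 0)
    (hu : Λ *ᵥ ![1, 1, 0, 0] = α • ![1, 1, 0, 0])
    (hv : Λ *ᵥ ![-1, 1, 0, 0] = β • ![-1, 1, 0, 0]) : IsWedgeBlock Λ := by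
  have hu' : Λ 0 0 + Λ 0 1 = α ∧ Λ 1 0 + Λ 1 1 = α ∧ Λ 2 0 + Λ 2 1 = 0 ∧ Λ 3 0 + Λ 3 1 = 0 := by
    simpa [funext_iff, mulVec, dotProduct, Fin.sum_univ_four, Fin.forall_fin_succ] using hu
  have hv' : -Λ 0 0 + Λ 0 1 = -β ∧ -Λ 1 0 + Λ 1 1 = β ∧ -Λ 2 0 + Λ 2 1 = 0 ∧
      -Λ 3 0 + Λ 3 1 = 0 := by
    simpa [funext_iff, mulVec, dotProduct, Fin.sum_univ_four, Fin.forall_fin_succ] using hv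
  have hcol (k : Fin 4) (hk : k ≠ 0 ∧ k ≠ 1) : Λ 0 k = 0 ∧ Λ 1 k = 0 := by
    have e1 : (Λ 0 k - Λ 1 k) * α = 0 := by
      simpa [mink, hu, hk.1, hk.2, sub_mul] using
        mink_mulVec_mulVec hΛ (Pi.single k 1) ![1, 1, 0, 0]
    have e2 : (-Λ 0 k - Λ 1 k) * β = 0 := by
      simpa [mink, hv, hk.1, hk.2, sub_mul] using
        mink_mulVec_mulVec hΛ (Pi.single k 1) ![-1, 1, 0, 0]
    have hdiff := (mul_eq_zero.mp e1).resolve_right hα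
    have hsum := (mul_eq_zero.mp e2).resolve_right hβ
    constructor <;> linarith
  obtain ⟨h02, h12⟩ := hcol 2 (by decide)
  obtain ⟨h03, h13⟩ := hcol 3 (by decide)
  refine ⟨Λ 0 0, Λ 0 1, !![Λ 2 2, Λ 2 3; Λ 3 2, Λ 3 3], ?_⟩
  ext i j
  fin_cases i <;> fin_cases j <;> simp [h02, h12, h03, h13] <;> linarith

lemma IsWedgeBlock.mulVec_boost {Λ : Matrix (Fin 4) (Fin 4) ℝ} (hΛ : IsWedgeBlock Λ) (t : ℝ)
    (x : Fin 4 → ℝ) : Λ *ᵥ boost t x = boost t (Λ *ᵥ x) := by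
  obtain ⟨c, s, B, rfl⟩ := hΛ
  ext i
  fin_cases i <;> simp [boost, mulVec, dotProduct, Fin.sum_univ_four] <;> ring

lemma IsWedgeBlock.mulVec_j0 {Λ : Matrix (Fin 4) (Fin 4) ℝ} (hΛ : IsWedgeBlock Λ)
    (x : Fin 4 → ℝ) : Λ *ᵥ j0 x = j0 (Λ *ᵥ x) := by
  obtain ⟨c, s, B, rfl⟩ := hΛ
  ext i
  fin_cases i <;> simp [j0, mulVec, dotProduct, Fin.sum_univ_four] <;> ring

lemma boost_add_of_apply_zero_one {a : Fin 4 → ℝ} (ha0 : a 0 = 0) (ha1 : a 1 = 0) (t : ℝ)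
    (x : Fin 4 → ℝ) : boost t (x + a) = boost t x + a := by
  ext i
  fin_cases i <;> simp [boost, ha0, ha1]

lemma j0_add_of_apply_zero_one {a : Fin 4 → ℝ} (ha0 : a 0 = 0) (ha1 : a 1 = 0)
    (x : Fin 4 → ℝ) : j0 (x + a) = j0 x + a := by
  ext i
  fin_cases i <;> simp [j0, ha0, ha1]

/-- If the Poincaré transformation g(x) = Λx + a maps W₀ onto itself, then a₀ = a₁ = 0,
Λ commutes with every standard boost and with the reflection j₀; consequently g commutes
with Λ₀(t) and with j₀ as affine maps of ℝ⁴. -/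
theorem stmt3 (Λ : Matrix (Fin 4) (Fin 4) ℝ) (hΛ : IsLorentz Λ) (a : Fin 4 → ℝ)
    (hg : (fun x => Λ.mulVec x + a) '' W0 = W0) :
    a 0 = 0 ∧ a 1 = 0 ∧
    (∀ t : ℝ, Λ.mulVec ∘ boost t = boost t ∘ Λ.mulVec) ∧
    (Λ.mulVec ∘ j0 = j0 ∘ Λ.mulVec) ∧
    (∀ t : ℝ, (fun x => Λ.mulVec x + a) ∘ boost t = boost t ∘ (fun x => Λ.mulVec x + a)) ∧
    ((fun x => Λ.mulVec x + a) ∘ j0 = j0 ∘ (fun x => Λ.mulVec x + a)) := by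
  obtain ⟨hη, -, h00⟩ := hΛ
  obtain ⟨ha0, ha1⟩ := apply_zero_one_eq_zero_of_image_eq_W0 hg
  have hW : MapsTo (Λ *ᵥ ·) W0 W0 := fun x hx => by
    rw [← add_mem_W0_iff ha0 ha1, ← hg]
    exact mem_image_of_mem _ hx
  obtain ⟨α, β, hα, hβ, hu, hv⟩ := exists_mulVec_lightRays_eq_smul hη h00 hW
  have hblock := isWedgeBlock_of_mulVec_lightRays hη hα.ne' hβ.ne' hu hv
  refine ⟨ha0, ha1, fun t => funext (hblock.mulVec_boost t), funext hblock.mulVec_j0,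
    fun t => funext fun x => ?_, funext fun x => ?_⟩
  · simp [hblock.mulVec_boost, boost_add_of_apply_zero_one ha0 ha1]
  · simp [hblock.mulVec_j0, j0_add_of_apply_zero_one ha0 ha1]
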